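/- arXiv:0805.2843 — 2 statements merged into one kernel-verified Lean document; each statement's English description precedes it below -/
import Mathlib

section
/- Semi-discrete one-soliton verification of the first bilinear equation: let a, c, p ∈ ℝ with 1 ± ap ≠ 0, p ≠ ±c, a ≠ 0, and define f_k(t) = ψ⁽⁰⁾(k,t), g_k(t) = ψ⁽¹⁾(k,t), h_k(t) = ψ⁽⁻¹⁾(k,t) where ψ⁽ⁿ⁾(k,t) = (p−c)ⁿ(1−ap)^{−k} e^{t/(p−c)} + ε(−p−c)ⁿ(1+ap)^{−k} e^{−t/(p+c)}, ε = ±1. Then ((1−ac)/a)·(f_{k+1}' f_k − f_{k+1} f_k') − f_{k+1} f_k = −g_{k+1} h_k for all k ∈ ℤ and t ∈ ℝ, where ' denotes d/dt. -/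
/-!
A one-soliton `ψ⁽ⁿ⁾(k, t)` is a sum of exponential modes `qⁿ (b - a q)⁻ᵏ e^{t/q}` with `b = 1 - ac`
and `q = p - c`, `q = -p - c`. Every such mode, hence every linear combination of them, solves the
linear dispersion relations `∂ₜ ψ⁽ⁿ⁾ = ψ⁽ⁿ⁻¹⁾` and `ψ⁽ⁿ⁾_k = b ψ⁽ⁿ⁾_{k+1} - a ψ⁽ⁿ⁺¹⁾_{k+1}`. For any
solution, substituting the dispersion relations for `f_k = ψ⁽⁰⁾_k` and `h_k = ψ⁽⁻¹⁾_k` turns the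
bilinear equation into a polynomial identity in `f_{k+1}`, `g_{k+1}`, `h_{k+1}`.
-/

open Real

structure SolvesDispersion (a b : ℝ) (ψ : ℤ → ℤ → ℝ → ℝ) : Prop where
  hasDerivAt : ∀ n k t, HasDerivAt (ψ n k) (ψ (n - 1) k t) t
  shift : ∀ n k t, ψ n k t = b * ψ n (k + 1) t - a * ψ (n + 1) (k + 1) t

namespace SolvesDispersion

variable {a b : ℝ} {ψ φ : ℤ → ℤ → ℝ → ℝ}

theorem add (hψ : SolvesDispersion a b ψ) (hφ : SolvesDispersion a b φ) :
    SolvesDispersion a b (fun n k t => ψ n k t + φ n k t) where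
  hasDerivAt n k t := (hψ.hasDerivAt n k t).add (hφ.hasDerivAt n k t)
  shift n k t := by
    rw [hψ.shift n k t, hφ.shift n k t]
    ring

theorem const_mul (hψ : SolvesDispersion a b ψ) (ε : ℝ) :
    SolvesDispersion a b (fun n k t => ε * ψ n k t) where
  hasDerivAt n k t := (hψ.hasDerivAt n k t).const_mul ε
  shift n k t := by
    rw [hψ.shift n k t]
    ring

theorem bilinear (hψ : SolvesDispersion a b ψ) (ha : a ≠ 0) (k : ℤ) (t : ℝ) :
    b / a * (deriv (ψ 0 (k + 1)) t * ψ 0 k t - ψ 0 (k + 1) t * deriv (ψ 0 k) t)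
      - ψ 0 (k + 1) t * ψ 0 k t = -(ψ 1 (k + 1) t * ψ (-1) k t) := by
  have hf := hψ.shift 0 k t
  have hh := hψ.shift (-1) k t
  rw [zero_add] at hf
  rw [neg_add_cancel] at hh
  rw [(hψ.hasDerivAt 0 (k + 1) t).deriv, (hψ.hasDerivAt 0 k t).deriv, zero_sub, hf, hh]
  field_simp
  ring

end SolvesDispersion

noncomputable def expMode (a b q : ℝ) (n k : ℤ) (t : ℝ) : ℝ :=
  q ^ n * (b - a * q) ^ (-k) * exp (t / q)

theorem solvesDispersion_expMode {a b q : ℝ} (hq : q ≠ 0) (hbq : b - a * q ≠ 0) :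
    SolvesDispersion a b (expMode a b q) where
  hasDerivAt n k t := by
    have hexp : HasDerivAt (fun t => exp (t / q)) (exp (t / q) * (1 / q)) t := by
      simpa using ((hasDerivAt_id t).div_const q).exp
    refine (hexp.const_mul (q ^ n * (b - a * q) ^ (-k))).congr_deriv ?_
    rw [expMode, zpow_sub₀ hq, zpow_one]
    ring
  shift n k t := by
    simp only [expMode, zpow_add₀ hq, zpow_one, neg_add, zpow_add₀ hbq, zpow_neg_one]
    field_simp

theorem stmt14_general
    (a c p ε : ℝ) (ha : a ≠ 0) (h1 : 1 - a * p ≠ 0) (h2 : 1 + a * p ≠ 0)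
    (hpc : p ≠ c) (hpc2 : p ≠ -c)
    (ψ : ℤ → ℤ → ℝ → ℝ)
    (hψ : ∀ n k t, ψ n k t =
      (p - c) ^ n * (1 - a * p) ^ (-k) * Real.exp (t / (p - c)) +
      ε * (-p - c) ^ n * (1 + a * p) ^ (-k) * Real.exp (-t / (p + c)))
    (f g h : ℤ → ℝ → ℝ)
    (hf : ∀ k t, f k t = ψ 0 k t) (hg : ∀ k t, g k t = ψ 1 k t)
    (hh : ∀ k t, h k t = ψ (-1) k t) :
    ∀ (k : ℤ) (t : ℝ),
      ((1 - a * c) / a) *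
        (deriv (fun t' => f (k + 1) t') t * f k t
          - f (k + 1) t * deriv (fun t' => f k t') t)
        - f (k + 1) t * f k t = -(g (k + 1) t * h k t) := by
  intro k t
  have hψ_modes : ψ = fun n k t =>
      expMode a (1 - a * c) (p - c) n k t + ε * expMode a (1 - a * c) (-p - c) n k t := by
    funext n k t
    rw [hψ, expMode, expMode, show 1 - a * c - a * (p - c) = 1 - a * p by ring,
      show 1 - a * c - a * (-p - c) = 1 + a * p by ring, show -p - c = -(p + c) by ring,
      div_neg, neg_div]
    ring
  have hsolves : SolvesDispersion a (1 - a * c) ψ := by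
    rw [hψ_modes]
    refine (solvesDispersion_expMode (sub_ne_zero.mpr hpc) ?_).add
      ((solvesDispersion_expMode ?_ ?_).const_mul ε)
    · rwa [show 1 - a * c - a * (p - c) = 1 - a * p by ring]
    · exact fun hpc2' => hpc2 (by linarith)
    · rwa [show 1 - a * c - a * (-p - c) = 1 + a * p by ring]
  simp only [hf, hg, hh]
  exact hsolves.bilinear ha k t

/-- Semi-discrete one-soliton verification of the first bilinear equation
`((1−ac)/a)D_t f_{k+1}·f_k − f_{k+1}f_k = −g_{k+1}h_k`. -/
theorem stmt14
    (a c p ε : ℝ) (ha : a ≠ 0) (h1 : 1 - a * p ≠ 0) (h2 : 1 + a * p ≠ 0)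
    (hpc : p ≠ c) (hpc2 : p ≠ -c) (hε : ε = 1 ∨ ε = -1)
    (ψ : ℤ → ℤ → ℝ → ℝ)
    (hψ : ∀ n k t, ψ n k t =
      (p - c) ^ n * (1 - a * p) ^ (-k) * Real.exp (t / (p - c)) +
      ε * (-p - c) ^ n * (1 + a * p) ^ (-k) * Real.exp (-t / (p + c)))
    (f g h : ℤ → ℝ → ℝ)
    (hf : ∀ k t, f k t = ψ 0 k t) (hg : ∀ k t, g k t = ψ 1 k t)
    (hh : ∀ k t, h k t = ψ (-1) k t) :
    ∀ (k : ℤ) (t : ℝ),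
      ((1 - a * c) / a) *
        (deriv (fun t' => f (k + 1) t') t * f k t
          - f (k + 1) t * deriv (fun t' => f k t') t)
        - f (k + 1) t * f k t = -(g (k + 1) t * h k t) :=
  stmt14_general a c p ε ha h1 h2 hpc hpc2 ψ hψ f g h hf hg hh
end

section
/- Semi-discrete one-soliton verification of the second bilinear equation: with the same f_k, g_k, h_k as above, ((1+ac)/a)·(f_{k+1}' f_k − f_{k+1} f_k') − f_{k+1} f_k = −g_k h_{k+1} for all k ∈ ℤ and t ∈ ℝ. -/
/-!
Each `f_k` is a sum of the two exponentials `e^{t/(p-c)}` and `e^{-t/(p+c)}`. In the Wronskian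
`f_{k+1}' f_k - f_{k+1} f_k'` only the mixed product `e^{t/(p-c)} e^{-t/(p+c)}` survives, and in
`f_{k+1} f_k` and `g_k h_{k+1}` the squares of the exponentials carry the same coefficients. The
identity therefore reduces to one rational identity between the coefficients of the mixed product.
-/

open Real

noncomputable def expSum (A B α β t : ℝ) : ℝ := A * exp (α * t) + B * exp (β * t)

theorem hasDerivAt_expSum (A B α β t : ℝ) :
    HasDerivAt (expSum A B α β) (α * A * exp (α * t) + β * B * exp (β * t)) t := by
  refine ((((hasDerivAt_id t).const_mul α).exp.const_mul A).add
    (((hasDerivAt_id t).const_mul β).exp.const_mul B)).congr_deriv ?_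
  simp only [id, mul_one]
  ring

theorem expSum_wronskian (A B C D α β t : ℝ) :
    deriv (expSum A B α β) t * expSum C D α β t - expSum A B α β t * deriv (expSum C D α β) t
      = (α - β) * (A * D - B * C) * exp (α * t) * exp (β * t) := by
  rw [(hasDerivAt_expSum A B α β t).deriv, (hasDerivAt_expSum C D α β t).deriv, expSum, expSum]
  ring

theorem soliton_cross_coeff_identity (a c p : ℝ) (ha : a ≠ 0) (h1 : 1 - a * p ≠ 0)
    (h2 : 1 + a * p ≠ 0) (hpc : p ≠ c) (hpc2 : p ≠ -c) :
    (1 + a * c) / a * ((p - c)⁻¹ + (p + c)⁻¹) * ((1 - a * p)⁻¹ - (1 + a * p)⁻¹)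
        - ((1 - a * p)⁻¹ + (1 + a * p)⁻¹)
      = -((p - c) / (-p - c) * (1 + a * p)⁻¹ + (-p - c) / (p - c) * (1 - a * p)⁻¹) := by
  have hsub : p - c ≠ 0 := sub_ne_zero.mpr hpc
  have hadd : p + c ≠ 0 := fun h0 => hpc2 (by linarith)
  have hneg : -p - c ≠ 0 := fun h0 => hpc2 (by linarith)
  field_simp
  ring

theorem stmt15_general
    (a c p ε : ℝ) (ha : a ≠ 0) (h1 : 1 - a * p ≠ 0) (h2 : 1 + a * p ≠ 0)
    (hpc : p ≠ c) (hpc2 : p ≠ -c)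
    (ψ : ℤ → ℤ → ℝ → ℝ)
    (hψ : ∀ n k t, ψ n k t =
      (p - c) ^ n * (1 - a * p) ^ (-k) * Real.exp (t / (p - c)) +
      ε * (-p - c) ^ n * (1 + a * p) ^ (-k) * Real.exp (-t / (p + c)))
    (f g h : ℤ → ℝ → ℝ)
    (hf : ∀ k t, f k t = ψ 0 k t) (hg : ∀ k t, g k t = ψ 1 k t)
    (hh : ∀ k t, h k t = ψ (-1) k t) :
    ∀ (k : ℤ) (t : ℝ),
      ((1 + a * c) / a) *
        (deriv (fun t' => f (k + 1) t') t * f k t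
          - f (k + 1) t * deriv (fun t' => f k t') t)
        - f (k + 1) t * f k t = -(g k t * h (k + 1) t) := by
  intro k t
  have hψ' : ∀ n m s, ψ n m s = (p - c) ^ n * (1 - a * p) ^ (-m) * exp ((p - c)⁻¹ * s)
      + ε * (-p - c) ^ n * (1 + a * p) ^ (-m) * exp (-(p + c)⁻¹ * s) := by
    intro n m s
    rw [hψ, div_eq_inv_mul, neg_div, div_eq_inv_mul, neg_mul]
  have hf' : ∀ m, f m = expSum ((1 - a * p) ^ (-m)) (ε * (1 + a * p) ^ (-m))
      (p - c)⁻¹ (-(p + c)⁻¹) := by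
    intro m; funext s; rw [hf, hψ', expSum]; simp only [zpow_zero, one_mul, mul_assoc]
  rw [hf' (k + 1), hf' k, expSum_wronskian, hg, hh, hψ', hψ', expSum, expSum]
  simp only [neg_add', zpow_sub_one₀ h1, zpow_sub_one₀ h2, zpow_one, zpow_neg_one]
  set X := (1 - a * p) ^ (-k)
  set Y := (1 + a * p) ^ (-k)
  set E₁ := exp ((p - c)⁻¹ * t)
  set E₂ := exp (-(p + c)⁻¹ * t)
  have hsub : p - c ≠ 0 := sub_ne_zero.mpr hpc
  have hneg : -p - c ≠ 0 := fun h0 => hpc2 (by linarith)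
  linear_combination ε * X * Y * E₁ * E₂ * soliton_cross_coeff_identity a c p ha h1 h2 hpc hpc2
    + X ^ 2 * (1 - a * p)⁻¹ * E₁ ^ 2 * mul_inv_cancel₀ hsub
    + ε ^ 2 * Y ^ 2 * (1 + a * p)⁻¹ * E₂ ^ 2 * mul_inv_cancel₀ hneg

/-- Semi-discrete one-soliton verification of the second bilinear equation
`((1+ac)/a)D_t f_{k+1}·f_k − f_{k+1}f_k = −g_k h_{k+1}`. -/
theorem stmt15
    (a c p ε : ℝ) (ha : a ≠ 0) (h1 : 1 - a * p ≠ 0) (h2 : 1 + a * p ≠ 0)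
    (hpc : p ≠ c) (hpc2 : p ≠ -c) (hε : ε = 1 ∨ ε = -1)
    (ψ : ℤ → ℤ → ℝ → ℝ)
    (hψ : ∀ n k t, ψ n k t =
      (p - c) ^ n * (1 - a * p) ^ (-k) * Real.exp (t / (p - c)) +
      ε * (-p - c) ^ n * (1 + a * p) ^ (-k) * Real.exp (-t / (p + c)))
    (f g h : ℤ → ℝ → ℝ)
    (hf : ∀ k t, f k t = ψ 0 k t) (hg : ∀ k t, g k t = ψ 1 k t)
    (hh : ∀ k t, h k t = ψ (-1) k t) :
    ∀ (k : ℤ) (t : ℝ),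
      ((1 + a * c) / a) *
        (deriv (fun t' => f (k + 1) t') t * f k t
          - f (k + 1) t * deriv (fun t' => f k t') t)
        - f (k + 1) t * f k t = -(g k t * h (k + 1) t) :=
  stmt15_general a c p ε ha h1 h2 hpc hpc2 ψ hψ f g h hf hg hh
end
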